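/- Characterization of single-agent believable true lies: a single-agent announcement-free formula φ in disjunctive normal form is a believable true lie — that is, (¬φ ∧ ◇φ) → [φ]φ is valid on the class KD45 — if and only if φ is not a disjunctive lying form. -/

import Mathlib

inductive Form (A : Type) : Type
  | atom : ℕ → Form A
  | neg  : Form A → Form A
  | conj : Form A → Form A → Form A
  | box  : A → Form A → Form A
  | ann  : Form A → Form A → Form A
  deriving DecidableEq

namespace Form

/-- ◇_a φ := ¬□_a¬φ -/
def dia {A : Type} (a : A) (φ : Form A) : Form A := .neg (.box a (.neg φ))

/-- φ → ψ := ¬(φ ∧ ¬ψ) -/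
def imp {A : Type} (φ ψ : Form A) : Form A := .neg (.conj φ (.neg ψ))

/-- φ ∨ ψ := ¬(¬φ ∧ ¬ψ) -/
def or {A : Type} (φ ψ : Form A) : Form A := .neg (.conj (.neg φ) (.neg ψ))

/-- ⊥ := p ∧ ¬p -/
def bot {A : Type} : Form A := .conj (.atom 0) (.neg (.atom 0))

def top {A : Type} : Form A := .neg bot

def iff {A : Type} (φ ψ : Form A) : Form A := .conj (imp φ ψ) (imp ψ φ)

end Form

/-- A Kripke model over agents `A` with state set `S`. -/
structure Model (A S : Type) where
  R : A → S → S → Prop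
  V : ℕ → S → Prop

/-- Arrow elimination: keep only arrows pointing to states satisfying `P`. -/
def Model.restrict {A S : Type} (M : Model A S) (P : S → Prop) : Model A S :=
  ⟨fun a s t => M.R a s t ∧ P t, M.V⟩

/-- Satisfaction, with believed announcements interpreted by arrow elimination. -/
def Sat {A S : Type} : Model A S → Form A → S → Prop
  | M, .atom n, s => M.V n s
  | M, .neg φ, s => ¬ Sat M φ s
  | M, .conj φ ψ, s => Sat M φ s ∧ Sat M ψ s
  | M, .box a φ, s => ∀ t : S, M.R a s t → Sat M φ t
  | M, .ann φ ψ, s => Sat (M.restrict (fun t => Sat M φ t)) ψ s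

/-- K45: every accessibility relation is transitive and euclidean. -/
def isK45 {A S : Type} (M : Model A S) : Prop :=
  ∀ a : A, (∀ x y z : S, M.R a x y → M.R a y z → M.R a x z) ∧
    (∀ x y z : S, M.R a x y → M.R a x z → M.R a y z)

/-- KD45: every accessibility relation is transitive, euclidean and serial. -/
def isKD45 {A S : Type} (M : Model A S) : Prop :=
  ∀ a : A, (∀ x y z : S, M.R a x y → M.R a y z → M.R a x z) ∧
    (∀ x y z : S, M.R a x y → M.R a x z → M.R a y z) ∧
    (∀ x : S, ∃ y : S, M.R a x y)

/-- A literal: a propositional variable together with a polarity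
(true = the variable itself, false = its negation). -/
abbrev Lit : Type := ℕ × Bool

/-- The formula corresponding to a literal (single agent). -/
def Lit.toForm (l : Lit) : Form Unit :=
  if l.2 then Form.atom l.1 else Form.neg (Form.atom l.1)

/-- Negation of a literal, with double negation removed. -/
def Lit.negate (l : Lit) : Lit := (l.1, !l.2)

/-- Conjunction of a list of formulas (empty conjunction = ⊤). -/
def bigConj (L : List (Form Unit)) : Form Unit := L.foldr Form.conj Form.top

/-- Disjunction of a list of formulas (empty disjunction = ⊥). -/
def bigOr (L : List (Form Unit)) : Form Unit := L.foldr Form.or Form.bot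

/-- Conjunction of a list of literals. -/
def litConj (L : List Lit) : Form Unit := bigConj (L.map Lit.toForm)

/-- Disjunction of a list of literals. -/
def litDisj (L : List Lit) : Form Unit := bigOr (L.map Lit.toForm)

/-- β̄: the conjunction of the negated literals (double negations removed) of a
disjunction β of literals. -/
def negLitConj (L : List Lit) : Form Unit := bigConj (L.map (fun l => Lit.toForm l.negate))

/-- A conjunct δ = α ∧ □β₁ ∧ … ∧ □β_n ∧ ◇γ₁ ∧ … ∧ ◇γ_m of a disjunctive normal
form: α and each γ are conjunctions of literals, each β is a disjunction of
literals. -/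
structure DNFConj where
  alpha : List Lit
  boxes : List (List Lit)
  dias  : List (List Lit)
  deriving DecidableEq

/-- δ^α, as a formula. -/
def DNFConj.alphaForm (δ : DNFConj) : Form Unit := litConj δ.alpha

/-- δ^{□◇} = □β₁ ∧ … ∧ □β_n ∧ ◇γ₁ ∧ … ∧ ◇γ_m. -/
def DNFConj.boxDiaForm (δ : DNFConj) : Form Unit :=
  Form.conj (bigConj (δ.boxes.map (fun β => Form.box () (litDisj β))))
    (bigConj (δ.dias.map (fun γ => Form.dia () (litConj γ))))

/-- The formula of a DNF conjunct. -/
def DNFConj.toForm (δ : DNFConj) : Form Unit := Form.conj δ.alphaForm δ.boxDiaForm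

/-- A formula in disjunctive normal form: a disjunction of conjuncts. -/
abbrev DNF : Type := List DNFConj

/-- The formula of a disjunctive normal form. -/
def DNF.toForm (φ : DNF) : Form Unit := bigOr (φ.map DNFConj.toForm)

/-- t(θ) = θ^α ∧ ⋀_{◇γ a conjunct of θ} ⋁_{σ ∈ S} ◇(σ^α ∧ γ). -/
def tForm (Ssel : List DNFConj) (θ : DNFConj) : Form Unit :=
  Form.conj θ.alphaForm
    (bigConj (θ.dias.map (fun γ =>
      bigOr (Ssel.map (fun σ => Form.dia () (Form.conj σ.alphaForm (litConj γ)))))))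

/-- χ₁ = ⋀_{θ∈T} t(θ) ∧ ⋀_{θ a disjunct of φ not in T} ¬t(θ). -/
def chi1 (φ : DNF) (Ssel Tsel : List DNFConj) : Form Unit :=
  Form.conj (bigConj (Tsel.map (tForm Ssel)))
    (bigConj ((φ.filter (fun δ => !(Tsel.contains δ))).map (fun δ => Form.neg (tForm Ssel δ))))

/-- χ₂ = ⋀_{σ∈S} σ^{□◇} ∧ ⋀_{σ a disjunct of φ not in S} ¬σ^{□◇}. -/
def chi2 (φ : DNF) (Ssel : List DNFConj) : Form Unit :=
  Form.conj (bigConj (Ssel.map DNFConj.boxDiaForm))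
    (bigConj ((φ.filter (fun δ => !(Ssel.contains δ))).map (fun δ => Form.neg δ.boxDiaForm)))

/-- χ₃ = ⋀_{θ∈T} ⋁_{σ∈S} ◇(σ^α ∧ β̄_θ), where β_θ is the chosen box conjunct of θ. -/
def chi3 (Ssel Tsel : List DNFConj) (βsel : DNFConj → List Lit) : Form Unit :=
  bigConj (Tsel.map (fun θ =>
    bigOr (Ssel.map (fun σ => Form.dia () (Form.conj σ.alphaForm (negLitConj (βsel θ)))))))

/-- χ = ¬φ ∧ ◇φ ∧ χ₁ ∧ χ₂ ∧ χ₃. -/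
def chiForm (φ : DNF) (Ssel Tsel : List DNFConj) (βsel : DNFConj → List Lit) : Form Unit :=
  Form.conj (Form.neg (DNF.toForm φ))
    (Form.conj (Form.dia () (DNF.toForm φ))
      (Form.conj (chi1 φ Ssel Tsel)
        (Form.conj (chi2 φ Ssel) (chi3 Ssel Tsel βsel))))

/-- Satisfiability on the class KD45. -/
def KD45Sat (χ : Form Unit) : Prop :=
  ∃ (S : Type) (M : Model Unit S) (s : S), isKD45 M ∧ Sat M χ s

/-- φ (in DNF) is a disjunctive lying form iff there are sets S and T of
disjuncts of φ and a chosen conjunct □β_θ of each θ ∈ T such that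
χ = ¬φ ∧ ◇φ ∧ χ₁ ∧ χ₂ ∧ χ₃ is KD45-satisfiable (equivalently, any DNF of χ is
clear). -/
def IsDisjunctiveLyingForm (φ : DNF) : Prop :=
  ∃ (Ssel Tsel : List DNFConj) (βsel : DNFConj → List Lit),
    (∀ σ ∈ Ssel, σ ∈ φ) ∧
    (∀ θ ∈ Tsel, θ ∈ φ) ∧
    (∀ θ ∈ Tsel, βsel θ ∈ θ.boxes) ∧
    KD45Sat (chiForm φ Ssel Tsel βsel)

/-!
In a K45 model every successor of a state `s` has the same successors as `s`, so at a successor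
of `s` the modal part `δ^{□◇}` of a disjunct has the truth value it has at `s`. Let `S` be the set
of disjuncts whose modal part holds at `s`. The successors of `s` that survive the announcement
of `φ` are then exactly those satisfying `σ^α` for some `σ ∈ S`, and `[φ]φ` holds at `s` iff some
disjunct `θ` satisfies `t(θ)` at `s` and none of its boxes `□β` is refuted by a surviving
successor, i.e. `⋁_{σ∈S} ◇(σ^α ∧ β̄)` is false at `s`. The formulas `χ₁`, `χ₂`, `χ₃` express that
this fails, once `S`, `T = {θ | t(θ)}` and the refuted boxes are fixed.
-/

section Satisfaction

variable {A S : Type} {M : Model A S} {s : S}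

lemma sat_top : Sat M Form.top s := by
  simp only [Form.top, Form.bot, Sat]; tauto

lemma not_sat_bot : ¬ Sat M Form.bot s := by
  simp only [Form.bot, Sat]; tauto

lemma sat_or {φ ψ : Form A} : Sat M (Form.or φ ψ) s ↔ Sat M φ s ∨ Sat M ψ s := by
  simp only [Form.or, Sat]; tauto

lemma sat_imp {φ ψ : Form A} : Sat M (Form.imp φ ψ) s ↔ (Sat M φ s → Sat M ψ s) := by
  simp only [Form.imp, Sat]; tauto

lemma sat_dia {a : A} {φ : Form A} : Sat M (Form.dia a φ) s ↔ ∃ t, M.R a s t ∧ Sat M φ t := by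
  simp only [Form.dia, Sat, not_forall, not_not, exists_prop]

lemma isKD45.isK45 (h : isKD45 M) : isK45 M :=
  fun a => ⟨(h a).1, (h a).2.1⟩

lemma isK45.rel_iff_of_rel (hK : isK45 M) {a : A} {t : S} (hst : M.R a s t) (u : S) :
    M.R a t u ↔ M.R a s u :=
  ⟨(hK a).1 s t u hst, (hK a).2 s t u hst⟩

end Satisfaction

section SingleAgent

variable {S : Type} {M : Model Unit S} {s : S}

lemma sat_bigConj {L : List (Form Unit)} : Sat M (bigConj L) s ↔ ∀ ψ ∈ L, Sat M ψ s := by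
  induction L with
  | nil => simpa [bigConj] using sat_top
  | cons ψ L ih => simp [bigConj, Sat, ← ih]

lemma sat_bigOr {L : List (Form Unit)} : Sat M (bigOr L) s ↔ ∃ ψ ∈ L, Sat M ψ s := by
  induction L with
  | nil => simpa [bigOr] using not_sat_bot
  | cons ψ L ih => simp [bigOr, sat_or, ← ih]

lemma sat_bigConj_map {α : Type*} {f : α → Form Unit} {L : List α} :
    Sat M (bigConj (L.map f)) s ↔ ∀ x ∈ L, Sat M (f x) s := by
  simp [sat_bigConj]

lemma sat_bigOr_map {α : Type*} {f : α → Form Unit} {L : List α} :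
    Sat M (bigOr (L.map f)) s ↔ ∃ x ∈ L, Sat M (f x) s := by
  simp [sat_bigOr]

lemma sat_restrict_lit {P : S → Prop} {l : Lit} :
    Sat (M.restrict P) l.toForm s ↔ Sat M l.toForm s := by
  rcases l with ⟨n, _ | _⟩ <;> rfl

lemma sat_lit_negate {l : Lit} : Sat M l.negate.toForm s ↔ ¬ Sat M l.toForm s := by
  rcases l with ⟨n, _ | _⟩ <;> simp [Lit.toForm, Lit.negate, Sat]

lemma sat_litConj {L : List Lit} : Sat M (litConj L) s ↔ ∀ l ∈ L, Sat M l.toForm s :=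
  sat_bigConj_map

lemma sat_litDisj {L : List Lit} : Sat M (litDisj L) s ↔ ∃ l ∈ L, Sat M l.toForm s :=
  sat_bigOr_map

lemma sat_negLitConj {L : List Lit} : Sat M (negLitConj L) s ↔ ¬ Sat M (litDisj L) s := by
  simp only [negLitConj, sat_bigConj_map, sat_litDisj, sat_lit_negate, not_exists, not_and]

lemma sat_restrict_litConj {P : S → Prop} {L : List Lit} :
    Sat (M.restrict P) (litConj L) s ↔ Sat M (litConj L) s := by
  simp only [sat_litConj, sat_restrict_lit]

lemma sat_restrict_litDisj {P : S → Prop} {L : List Lit} :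
    Sat (M.restrict P) (litDisj L) s ↔ Sat M (litDisj L) s := by
  simp only [sat_litDisj, sat_restrict_lit]

lemma DNFConj.sat_toForm {δ : DNFConj} :
    Sat M δ.toForm s ↔ Sat M δ.alphaForm s ∧ Sat M δ.boxDiaForm s :=
  Iff.rfl

lemma DNFConj.sat_boxDiaForm {δ : DNFConj} :
    Sat M δ.boxDiaForm s ↔
      (∀ β ∈ δ.boxes, ∀ u, M.R () s u → Sat M (litDisj β) u) ∧
        ∀ γ ∈ δ.dias, ∃ u, M.R () s u ∧ Sat M (litConj γ) u := by
  simp only [DNFConj.boxDiaForm, Sat, sat_bigConj_map, sat_dia]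

lemma DNF.sat_toForm {φ : DNF} : Sat M φ.toForm s ↔ ∃ δ ∈ φ, Sat M δ.toForm s :=
  sat_bigOr_map

lemma DNFConj.sat_restrict_toForm {P : S → Prop} {δ : DNFConj} :
    Sat (M.restrict P) δ.toForm s ↔ Sat M δ.alphaForm s ∧
      (∀ β ∈ δ.boxes, ∀ u, M.R () s u → P u → Sat M (litDisj β) u) ∧
        ∀ γ ∈ δ.dias, ∃ u, (M.R () s u ∧ P u) ∧ Sat M (litConj γ) u := by
  simp only [DNFConj.sat_toForm, DNFConj.sat_boxDiaForm, DNFConj.alphaForm,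
    sat_restrict_litConj, sat_restrict_litDisj]
  simp only [Model.restrict, and_imp]

lemma sat_tForm {Ssel : List DNFConj} {θ : DNFConj} :
    Sat M (tForm Ssel θ) s ↔ Sat M θ.alphaForm s ∧
      ∀ γ ∈ θ.dias, ∃ σ ∈ Ssel, ∃ u, M.R () s u ∧ Sat M σ.alphaForm u ∧ Sat M (litConj γ) u := by
  simp only [tForm, Sat, sat_bigConj_map, sat_bigOr_map, sat_dia]

/-- `⋁_{σ∈S} ◇(σ^α ∧ β̄)`, asserted by `χ₃` for `β = β_θ`. -/
def refuteForm (Ssel : List DNFConj) (β : List Lit) : Form Unit :=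
  bigOr (Ssel.map fun σ => Form.dia () (Form.conj σ.alphaForm (negLitConj β)))

lemma sat_refuteForm {Ssel : List DNFConj} {β : List Lit} :
    Sat M (refuteForm Ssel β) s ↔
      ∃ σ ∈ Ssel, ∃ u, M.R () s u ∧ Sat M σ.alphaForm u ∧ ¬ Sat M (litDisj β) u := by
  simp only [refuteForm, Sat, sat_bigOr_map, sat_dia, sat_negLitConj]

lemma sat_chi1 {φ : DNF} {Ssel Tsel : List DNFConj} :
    Sat M (chi1 φ Ssel Tsel) s ↔ (∀ θ ∈ Tsel, Sat M (tForm Ssel θ) s) ∧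
      ∀ θ ∈ φ, θ ∉ Tsel → ¬ Sat M (tForm Ssel θ) s := by
  simp [chi1, Sat, sat_bigConj_map]

lemma sat_chi2 {φ : DNF} {Ssel : List DNFConj} :
    Sat M (chi2 φ Ssel) s ↔ (∀ σ ∈ Ssel, Sat M σ.boxDiaForm s) ∧
      ∀ δ ∈ φ, δ ∉ Ssel → ¬ Sat M δ.boxDiaForm s := by
  simp [chi2, Sat, sat_bigConj_map]

lemma sat_chi3 {Ssel Tsel : List DNFConj} {βsel : DNFConj → List Lit} :
    Sat M (chi3 Ssel Tsel βsel) s ↔ ∀ θ ∈ Tsel, Sat M (refuteForm Ssel (βsel θ)) s :=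
  sat_bigConj_map

lemma sat_chiForm {φ : DNF} {Ssel Tsel : List DNFConj} {βsel : DNFConj → List Lit} :
    Sat M (chiForm φ Ssel Tsel βsel) s ↔ ¬ Sat M φ.toForm s ∧ Sat M (Form.dia () φ.toForm) s ∧
      Sat M (chi1 φ Ssel Tsel) s ∧ Sat M (chi2 φ Ssel) s ∧ Sat M (chi3 Ssel Tsel βsel) s :=
  Iff.rfl

end SingleAgent

section K45

variable {S : Type} {M : Model Unit S} {s : S}

lemma isK45.sat_boxDiaForm_of_rel (hK : isK45 M) {t : S} (hst : M.R () s t) {δ : DNFConj} :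
    Sat M δ.boxDiaForm t ↔ Sat M δ.boxDiaForm s := by
  simp only [DNFConj.sat_boxDiaForm, hK.rel_iff_of_rel hst]

variable {φ : DNF} {Ssel : List DNFConj}

lemma isK45.sat_dnf_of_rel (hK : isK45 M)
    (hSsel : ∀ δ, δ ∈ Ssel ↔ δ ∈ φ ∧ Sat M δ.boxDiaForm s) {u : S} (hsu : M.R () s u) :
    Sat M φ.toForm u ↔ ∃ σ ∈ Ssel, Sat M σ.alphaForm u := by
  simp only [DNF.sat_toForm, DNFConj.sat_toForm, hK.sat_boxDiaForm_of_rel hsu, hSsel]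
  grind

lemma isK45.sat_ann_self_iff (hK : isK45 M)
    (hSsel : ∀ δ, δ ∈ Ssel ↔ δ ∈ φ ∧ Sat M δ.boxDiaForm s) :
    Sat M (Form.ann φ.toForm φ.toForm) s ↔
      ∃ θ ∈ φ, Sat M (tForm Ssel θ) s ∧ ∀ β ∈ θ.boxes, ¬ Sat M (refuteForm Ssel β) s := by
  have hsurvive := fun u (hsu : M.R () s u) => hK.sat_dnf_of_rel hSsel hsu
  change Sat (M.restrict _) φ.toForm s ↔ _
  rw [DNF.sat_toForm]
  refine exists_congr fun θ => and_congr_right fun _ => ?_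
  rw [DNFConj.sat_restrict_toForm, sat_tForm]
  simp only [sat_refuteForm]
  grind

end K45

section LyingForm

variable {S : Type} {M : Model Unit S} {s : S} {φ : DNF}

lemma isK45.not_sat_ann_self_of_sat_chiForm (hK : isK45 M) {Ssel Tsel : List DNFConj}
    {βsel : DNFConj → List Lit} (hSφ : ∀ σ ∈ Ssel, σ ∈ φ) (hβ : ∀ θ ∈ Tsel, βsel θ ∈ θ.boxes)
    (hχ : Sat M (chiForm φ Ssel Tsel βsel) s) : ¬ Sat M (Form.ann φ.toForm φ.toForm) s := by
  obtain ⟨-, -, hχ₁, hχ₂, hχ₃⟩ := sat_chiForm.1 hχ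
  obtain ⟨-, hnotT⟩ := sat_chi1.1 hχ₁
  obtain ⟨hS, hnotS⟩ := sat_chi2.1 hχ₂
  have hSsel : ∀ δ, δ ∈ Ssel ↔ δ ∈ φ ∧ Sat M δ.boxDiaForm s := fun δ =>
    ⟨fun h => ⟨hSφ δ h, hS δ h⟩, fun ⟨hδ, hbd⟩ => by_contra fun h => hnotS δ hδ h hbd⟩
  intro hann
  obtain ⟨θ, hθ, ht, hnoref⟩ := (hK.sat_ann_self_iff hSsel).1 hann
  by_cases hT : θ ∈ Tsel
  · exact hnoref _ (hβ θ hT) (sat_chi3.1 hχ₃ θ hT)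
  · exact hnotT θ hθ hT ht

lemma isK45.exists_sat_chiForm_of_not_sat_ann_self (hK : isK45 M)
    (hnφ : ¬ Sat M φ.toForm s) (hdφ : Sat M (Form.dia () φ.toForm) s)
    (hann : ¬ Sat M (Form.ann φ.toForm φ.toForm) s) :
    ∃ (Ssel Tsel : List DNFConj) (βsel : DNFConj → List Lit),
      (∀ σ ∈ Ssel, σ ∈ φ) ∧ (∀ θ ∈ Tsel, θ ∈ φ) ∧ (∀ θ ∈ Tsel, βsel θ ∈ θ.boxes) ∧
        Sat M (chiForm φ Ssel Tsel βsel) s := by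
  classical
  set Ssel := φ.filter fun δ => Sat M δ.boxDiaForm s
  have hSsel : ∀ δ, δ ∈ Ssel ↔ δ ∈ φ ∧ Sat M δ.boxDiaForm s := by simp [Ssel]
  set Tsel := φ.filter fun θ => Sat M (tForm Ssel θ) s
  have hTsel : ∀ θ, θ ∈ Tsel ↔ θ ∈ φ ∧ Sat M (tForm Ssel θ) s := by simp [Tsel]
  have hrefuted : ∀ θ ∈ Tsel, ∃ β, β ∈ θ.boxes ∧ Sat M (refuteForm Ssel β) s := by
    intro θ hθ
    have := (hK.sat_ann_self_iff hSsel).not.1 hann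
    push Not at this
    exact this θ ((hTsel θ).1 hθ).1 ((hTsel θ).1 hθ).2
  choose! βsel hβ using hrefuted
  refine ⟨Ssel, Tsel, βsel, fun σ h => ((hSsel σ).1 h).1, fun θ h => ((hTsel θ).1 h).1,
    fun θ h => (hβ θ h).1, sat_chiForm.2 ⟨hnφ, hdφ, ?_, ?_, ?_⟩⟩
  · exact sat_chi1.2 ⟨fun θ h => ((hTsel θ).1 h).2, fun θ hθ hT ht => hT ((hTsel θ).2 ⟨hθ, ht⟩)⟩
  · exact sat_chi2.2 ⟨fun σ h => ((hSsel σ).1 h).2, fun δ hδ hS hbd => hS ((hSsel δ).2 ⟨hδ, hbd⟩)⟩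
  · exact sat_chi3.2 fun θ h => (hβ θ h).2

end LyingForm

/-- Characterization of single-agent believable true lies: a single-agent
(announcement-free) formula φ in disjunctive normal form is a believable true
lie — (¬φ ∧ ◇φ) → [φ]φ is valid on KD45 — iff φ is not a disjunctive lying
form. -/
theorem believable_true_lie_characterization (φ : DNF) :
    (∀ (S : Type) (M : Model Unit S) (s : S), isKD45 M →
      Sat M (Form.imp (Form.conj (Form.neg (DNF.toForm φ)) (Form.dia () (DNF.toForm φ)))
        (Form.ann (DNF.toForm φ) (DNF.toForm φ))) s)
      ↔ ¬ IsDisjunctiveLyingForm φ := by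
  constructor
  · rintro hvalid ⟨Ssel, Tsel, βsel, hSφ, -, hβ, S, M, s, hKD, hχ⟩
    have hlie := sat_imp.1 (hvalid S M s hKD) ⟨hχ.1, hχ.2.1⟩
    exact hKD.isK45.not_sat_ann_self_of_sat_chiForm hSφ hβ hχ hlie
  · intro hnot S M s hKD
    refine sat_imp.2 fun ⟨hnφ, hdφ⟩ => by_contra fun hann => hnot ?_
    obtain ⟨Ssel, Tsel, βsel, hSφ, hTφ, hβ, hχ⟩ :=
      hKD.isK45.exists_sat_chiForm_of_not_sat_ann_self hnφ hdφ hann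
    exact ⟨Ssel, Tsel, βsel, hSφ, hTφ, hβ, S, M, s, hKD, hχ⟩
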